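/- arXiv:1903.08510 — 6 statements merged into one kernel-verified Lean document; each statement's English description precedes it below -/
import Mathlib

section
/- For every x ∈ ℝ₊ⁿ and r ≥ 0, the Fisher information ball { y ∈ ℝ₊ⁿ : 2 ∑_{i=1}^n (√x_i − √y_i)² ≤ r² } is a convex subset of ℝⁿ. -/
/-- Fisher information balls are convex. -/
theorem fisher_ball_convex (n : ℕ) (x : Fin n → ℝ) (hx : ∀ i, 0 < x i)
    (r : ℝ) (hr : 0 ≤ r) :
    Convex ℝ {y : Fin n → ℝ | (∀ i, 0 < y i) ∧
      2 * ∑ i, (Real.sqrt (x i) - Real.sqrt (y i)) ^ 2 ≤ r ^ 2} := by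
  intro y hy z hz s t hs ht hst
  have ht1 : t = 1 - s := by linarith
  subst ht1
  have hpos : ∀ i, 0 < s * y i + (1 - s) * z i := by
    intro i
    rcases hs.eq_or_lt with h | h
    · simpa [← h] using hz.1 i
    · have h1 : 0 < s * y i := mul_pos h (hy.1 i)
      have h2 : 0 ≤ (1 - s) * z i := mul_nonneg ht (hz.1 i).le
      linarith
  refine ⟨fun i => by simpa using hpos i, ?_⟩
  have key : ∀ i ∈ Finset.univ,
      (Real.sqrt (x i) - Real.sqrt ((s • y + (1 - s) • z) i)) ^ 2 ≤
      s * (Real.sqrt (x i) - Real.sqrt (y i)) ^ 2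
        + (1 - s) * (Real.sqrt (x i) - Real.sqrt (z i)) ^ 2 := by
    intro i _
    have ha := Real.sqrt_nonneg (x i)
    have hyu := Real.sqrt_nonneg (y i)
    have hzu := Real.sqrt_nonneg (z i)
    have hsqy : Real.sqrt (y i) ^ 2 = y i := Real.sq_sqrt (hy.1 i).le
    have hsqz : Real.sqrt (z i) ^ 2 = z i := Real.sq_sqrt (hz.1 i).le
    have hcomb : (s • y + (1 - s) • z) i = s * y i + (1 - s) * z i := by
      simp [mul_comm]
    have hsqc : Real.sqrt ((s • y + (1 - s) • z) i) ^ 2 = s * y i + (1 - s) * z i := by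
      rw [show (s • y + (1 - s) • z) i = s * y i + (1 - s) * z i from hcomb]
      exact Real.sq_sqrt (hpos i).le
    have hconc : s * Real.sqrt (y i) + (1 - s) * Real.sqrt (z i) ≤
        Real.sqrt ((s • y + (1 - s) • z) i) := by
      rw [show (s • y + (1 - s) • z) i = s * y i + (1 - s) * z i from hcomb]
      rw [Real.le_sqrt (by positivity)]
      · nlinarith [sq_nonneg (Real.sqrt (y i) - Real.sqrt (z i)), mul_nonneg hs ht]
      · exact (hpos i).le
    nlinarith [mul_le_mul_of_nonneg_left hconc ha, mul_nonneg hs ht,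
      sq_nonneg (Real.sqrt (x i)), hsqy, hsqz, hsqc]
  have hsum := Finset.sum_le_sum key
  have h1 : 2 * ∑ i, (Real.sqrt (x i) - Real.sqrt (y i)) ^ 2 ≤ r ^ 2 := hy.2
  have h2 : 2 * ∑ i, (Real.sqrt (x i) - Real.sqrt (z i)) ^ 2 ≤ r ^ 2 := hz.2
  have hexp : ∑ i, (s * (Real.sqrt (x i) - Real.sqrt (y i)) ^ 2
      + (1 - s) * (Real.sqrt (x i) - Real.sqrt (z i)) ^ 2)
      = s * ∑ i, (Real.sqrt (x i) - Real.sqrt (y i)) ^ 2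
        + (1 - s) * ∑ i, (Real.sqrt (x i) - Real.sqrt (z i)) ^ 2 := by
    rw [Finset.sum_add_distrib, Finset.mul_sum, Finset.mul_sum]
  rw [hexp] at hsum
  nlinarith [mul_le_mul_of_nonneg_left h1 hs, mul_le_mul_of_nonneg_left h2 ht]
end

section
/- For all a, b > 0, the Jensen–Shannon divergence JS(a,b) = ½( a ln(2a/(a+b)) + b ln(2b/(a+b)) ) and the squared Fisher distance ρ(a,b)² = 2(√a − √b)² satisfy 4·JS(a,b) ≤ ρ(a,b)². -/
/-!
Fix `b > 0` and regard `g(x) = 2·JS(x, b) - (√x - √b)²` as a function of `x > 0`, writing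
`2·JS(x, b) = x log x + b log b - (x + b) log ((x + b) / 2)`. Its second derivative is
`-√b (√x - √b)² / (2 x √x (x + b)) ≤ 0`, so `g` is concave; since `g'(b) = 0`, the point `b` is a
global maximum of `g`, and `g(b) = 0`.
-/

open Real Set

lemma ConcaveOn.isMaxOn_of_hasDerivAt_eq_zero {S : Set ℝ} {f : ℝ → ℝ} {x : ℝ}
    (hf : ConcaveOn ℝ S f) (hx : x ∈ interior S) (hd : HasDerivAt f 0 x) : IsMaxOn f S x := by
  have hd' : derivWithin (-f) (Ioi x) x = 0 := by
    simpa using hd.neg.hasDerivWithinAt.derivWithin (uniqueDiffWithinAt_Ioi x)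
  simpa using (hf.neg.isMinOn_of_rightDeriv_eq_zero hx hd').neg

noncomputable def jsFisherGap (b x : ℝ) : ℝ :=
  x * log x + b * log b - (x + b) * log ((x + b) / 2) - (√x - √b) ^ 2

lemma jsFisherGap_self (b : ℝ) : jsFisherGap b b = 0 := by
  simp only [jsFisherGap, ← two_mul, mul_div_cancel_left₀ b two_ne_zero, sub_self]
  ring

lemma hasDerivAt_jsFisherGap {b x : ℝ} (hb : 0 ≤ b) (hx : 0 < x) :
    HasDerivAt (jsFisherGap b) (log x - log ((x + b) / 2) - 1 + √b / √x) x := by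
  have hm : HasDerivAt (fun y => (y + b) / 2) (1 / 2) x :=
    ((hasDerivAt_id' x).add_const b).div_const 2
  have hmlog := ((hasDerivAt_id' x).add_const b).mul (hm.log (by positivity))
  have hsq := ((hasDerivAt_sqrt hx.ne').sub_const √b).pow 2
  have hsx : √x ≠ 0 := (sqrt_pos.2 hx).ne'
  have h := (((hasDerivAt_mul_log hx.ne').add_const (b * log b)).sub hmlog).sub hsq
  refine h.congr_deriv ?_
  field_simp
  ring

lemma hasDerivAt_jsFisherGap_deriv {b x : ℝ} (hb : 0 ≤ b) (hx : 0 < x) :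
    HasDerivAt (fun y => log y - log ((y + b) / 2) - 1 + √b / √y)
      (x⁻¹ - (x + b)⁻¹ - √b / (2 * x * √x)) x := by
  have hm : HasDerivAt (fun y => (y + b) / 2) (1 / 2) x :=
    ((hasDerivAt_id' x).add_const b).div_const 2
  have hsx : √x ≠ 0 := (sqrt_pos.2 hx).ne'
  have h := (((hasDerivAt_log hx.ne').sub (hm.log (by positivity))).sub_const 1).add
    ((hasDerivAt_const x √b).div (hasDerivAt_sqrt hx.ne') hsx)
  refine h.congr_deriv ?_
  rw [sq_sqrt hx.le]
  field_simp
  ring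

lemma jsFisherGap_deriv2_nonpos {b x : ℝ} (hb : 0 ≤ b) (hx : 0 < x) :
    x⁻¹ - (x + b)⁻¹ - √b / (2 * x * √x) ≤ 0 := by
  obtain ⟨p, hp, rfl⟩ : ∃ p, 0 < p ∧ p ^ 2 = x := ⟨√x, sqrt_pos.2 hx, sq_sqrt hx.le⟩
  obtain ⟨q, hq, rfl⟩ : ∃ q, 0 ≤ q ∧ q ^ 2 = b := ⟨√b, sqrt_nonneg b, sq_sqrt hb⟩
  have hform : (p ^ 2)⁻¹ - (p ^ 2 + q ^ 2)⁻¹ - √(q ^ 2) / (2 * p ^ 2 * √(p ^ 2))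
      = -(q * (p - q) ^ 2) / (2 * p ^ 3 * (p ^ 2 + q ^ 2)) := by
    rw [sqrt_sq hp.le, sqrt_sq hq]
    field_simp
    ring
  rw [hform]
  exact div_nonpos_of_nonpos_of_nonneg (neg_nonpos.2 (by positivity)) (by positivity)

lemma concaveOn_jsFisherGap {b : ℝ} (hb : 0 < b) : ConcaveOn ℝ (Ioi 0) (jsFisherGap b) := by
  refine concaveOn_of_hasDerivWithinAt2_nonpos (convex_Ioi 0) ?_ ?_ ?_ ?_
    (f' := fun x => log x - log ((x + b) / 2) - 1 + √b / √x)
    (f'' := fun x => x⁻¹ - (x + b)⁻¹ - √b / (2 * x * √x))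
  · exact fun x hx => (hasDerivAt_jsFisherGap hb.le hx).continuousAt.continuousWithinAt
  · rw [interior_Ioi]
    exact fun x hx => (hasDerivAt_jsFisherGap hb.le hx).hasDerivWithinAt
  · rw [interior_Ioi]
    exact fun x hx => (hasDerivAt_jsFisherGap_deriv hb.le hx).hasDerivWithinAt
  · rw [interior_Ioi]
    exact fun x hx => jsFisherGap_deriv2_nonpos hb.le hx

lemma jsFisherGap_nonpos {a b : ℝ} (ha : 0 < a) (hb : 0 < b) : jsFisherGap b a ≤ 0 := by
  have hd : HasDerivAt (jsFisherGap b) 0 b := by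
    simpa [← two_mul, div_self (sqrt_pos.2 hb).ne'] using hasDerivAt_jsFisherGap hb.le hb
  have hmax := (concaveOn_jsFisherGap hb).isMaxOn_of_hasDerivAt_eq_zero
    (by rwa [interior_Ioi]) hd
  exact (hmax ha).trans_eq (jsFisherGap_self b)

/-- `4·JS(a,b) ≤ ρ(a,b)²` for positive reals. -/
theorem four_js_le_fisher_sq (a b : ℝ) (ha : 0 < a) (hb : 0 < b) :
    4 * ((1 / 2) * (a * Real.log (2 * a / (a + b)) + b * Real.log (2 * b / (a + b))))
      ≤ 2 * (Real.sqrt a - Real.sqrt b) ^ 2 := by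
  have hlog {c : ℝ} (hc : 0 < c) : log (2 * c / (a + b)) = log c - log ((a + b) / 2) := by
    rw [← log_div hc.ne' (by positivity)]
    congr 1
    field_simp
  have hgap := jsFisherGap_nonpos ha hb
  rw [jsFisherGap] at hgap
  rw [hlog ha, hlog hb]
  linear_combination 2 * hgap
end

section
/- For all a, b > 0, the squared Fisher distance and the Jensen–Shannon divergence satisfy ρ(a,b)² = 2(√a − √b)² ≤ (4/ln 2)·JS(a,b), where JS(a,b) = ½( a ln(2a/(a+b)) + b ln(2b/(a+b)) ). The constant 4/ln 2 is optimal: it is attained in the limit b/a → ∞. -/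
open Filter

/-!
Both sides are symmetric and homogeneous of degree one, so it suffices to take `a = 1` and
`b = u ^ 2` with `u ≥ 1`. Then `(4 / log 2) JS - ρ² = (2 / log 2) G(u)` with
`G(u) = 2u log 2 + 2u² log u - (1 + u²) log (1 + u²)`. Now `G(1) = 0` and
`G'(u) = 2 (log 2 - u log (1 + u⁻²)) ≥ 0`, because `u log (1 + u⁻²)` equals `log 2` at
`u = 1` and decreases: its derivative `log (1 + u⁻²) - 2 / (1 + u²)` is nonpositive since
`log (1 + x) ≤ 2x / (1 + x)` on `[0, 1]`.
For the constant, `ρ(1, b)² ~ 2b` and `JS(1, b) ~ (log 2 / 2) b` as `b → ∞`.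
-/

open Real Topology Set

noncomputable def fisherSq (a b : ℝ) : ℝ := 2 * (√a - √b) ^ 2

noncomputable def jensenShannon (a b : ℝ) : ℝ :=
  1 / 2 * (a * log (2 * a / (a + b)) + b * log (2 * b / (a + b)))

lemma fisherSq_comm (a b : ℝ) : fisherSq a b = fisherSq b a := by
  unfold fisherSq; ring

lemma jensenShannon_comm (a b : ℝ) : jensenShannon a b = jensenShannon b a := by
  unfold jensenShannon; rw [add_comm a b, add_comm (a * _)]

lemma fisherSq_mul_mul {c : ℝ} (hc : 0 ≤ c) (a b : ℝ) :
    fisherSq (c * a) (c * b) = c * fisherSq a b := by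
  unfold fisherSq
  rw [sqrt_mul hc, sqrt_mul hc, ← mul_sub, mul_pow, sq_sqrt hc]
  ring

lemma jensenShannon_mul_mul {c : ℝ} (hc : c ≠ 0) (a b : ℝ) :
    jensenShannon (c * a) (c * b) = c * jensenShannon a b := by
  unfold jensenShannon
  rw [← mul_add, mul_left_comm 2 c a, mul_left_comm 2 c b, mul_div_mul_left _ _ hc,
    mul_div_mul_left _ _ hc]
  ring

lemma fisherSq_eq_mul_fisherSq_one_div {a : ℝ} (ha : 0 < a) (b : ℝ) :
    fisherSq a b = a * fisherSq 1 (b / a) := by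
  rw [← fisherSq_mul_mul ha.le, mul_one, mul_div_cancel₀ _ ha.ne']

lemma jensenShannon_eq_mul_jensenShannon_one_div {a : ℝ} (ha : a ≠ 0) (b : ℝ) :
    jensenShannon a b = a * jensenShannon 1 (b / a) := by
  rw [← jensenShannon_mul_mul ha, mul_one, mul_div_cancel₀ _ ha]

lemma monotoneOn_Ici_of_hasDerivAt_nonneg {f f' : ℝ → ℝ} {c : ℝ}
    (hf : ∀ x ∈ Ici c, HasDerivAt f (f' x) x) (hf'₀ : ∀ x ∈ Ioi c, 0 ≤ f' x) :
    MonotoneOn f (Ici c) := by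
  refine monotoneOn_of_hasDerivWithinAt_nonneg (f' := f') (convex_Ici c)
    (fun x hx => (hf x hx).continuousAt.continuousWithinAt) (fun x hx => ?_) ?_
  · rw [interior_Ici] at hx ⊢
    exact (hf x (mem_Ici_of_Ioi hx)).hasDerivWithinAt
  · rwa [interior_Ici]

lemma log_one_add_le_two_mul_div {x : ℝ} (hx₀ : 0 ≤ x) (hx₁ : x ≤ 1) :
    log (1 + x) ≤ 2 * x / (1 + x) := by
  have hx : 0 < 1 + x := by linarith
  calc log (1 + x) ≤ x := by linarith [log_le_sub_one_of_pos hx]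
    _ ≤ 2 * x / (1 + x) := by rw [le_div_iff₀ hx]; nlinarith

lemma hasDerivAt_mul_log_one_add_sq_sub {u : ℝ} (hu : 0 < u) :
    HasDerivAt (fun u => u * (log (1 + u ^ 2) - 2 * log u))
      (log (1 + u ^ 2) - 2 * log u - 2 / (1 + u ^ 2)) u := by
  have hsq : HasDerivAt (fun u : ℝ => 1 + u ^ 2) (2 * u) u := by
    simpa using (hasDerivAt_pow 2 u).const_add 1
  refine ((hasDerivAt_id' u).mul ((hsq.log (by positivity)).sub
    ((hasDerivAt_log hu.ne').const_mul 2))).congr_deriv ?_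
  simp only [Pi.sub_apply]
  field_simp
  ring

lemma mul_log_one_add_sq_sub_le_log_two {u : ℝ} (hu : 1 ≤ u) :
    u * (log (1 + u ^ 2) - 2 * log u) ≤ log 2 := by
  have hmono : MonotoneOn (fun u => -(u * (log (1 + u ^ 2) - 2 * log u))) (Ici 1) := by
    refine monotoneOn_Ici_of_hasDerivAt_nonneg
      (fun x hx => (hasDerivAt_mul_log_one_add_sq_sub (by simp at hx; linarith)).neg)
      (fun x hx => ?_)
    have hx : 1 < x := hx
    have hlog : log (1 + x ^ 2) - 2 * log x = log (1 + (x ^ 2)⁻¹) := by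
      rw [show (2 : ℝ) * log x = log (x ^ 2) by rw [log_pow]; norm_num,
        ← log_div (by positivity) (by positivity)]
      congr 1; field_simp; ring
    have hinv : (x ^ 2)⁻¹ ≤ 1 := inv_le_one_of_one_le₀ (by nlinarith)
    have hbound := log_one_add_le_two_mul_div (by positivity) hinv
    have hrhs : 2 * (x ^ 2)⁻¹ / (1 + (x ^ 2)⁻¹) = 2 / (1 + x ^ 2) := by field_simp; ring
    rw [hlog]
    linarith
  have hu1 := hmono self_mem_Ici hu hu
  norm_num at hu1
  linarith

noncomputable def fisherJSGap (u : ℝ) : ℝ :=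
  2 * u * log 2 + 2 * u ^ 2 * log u - (1 + u ^ 2) * log (1 + u ^ 2)

lemma hasDerivAt_fisherJSGap {u : ℝ} (hu : 0 < u) :
    HasDerivAt fisherJSGap (2 * log 2 - 2 * (u * (log (1 + u ^ 2) - 2 * log u))) u := by
  have hsq : HasDerivAt (fun u : ℝ => 1 + u ^ 2) (2 * u) u := by
    simpa using (hasDerivAt_pow 2 u).const_add 1
  have hlin : HasDerivAt (fun u : ℝ => 2 * u * log 2) (2 * log 2) u := by
    simpa using ((hasDerivAt_id' u).const_mul 2).mul_const (log 2)
  refine ((hlin.add ((((hasDerivAt_pow 2 u).const_mul 2).mul (hasDerivAt_log hu.ne')))).sub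
    (hsq.mul (hsq.log (by positivity)))).congr_deriv ?_
  field_simp
  ring

lemma fisherJSGap_nonneg {u : ℝ} (hu : 1 ≤ u) : 0 ≤ fisherJSGap u := by
  have hmono : MonotoneOn fisherJSGap (Ici 1) :=
    monotoneOn_Ici_of_hasDerivAt_nonneg
      (fun x hx => hasDerivAt_fisherJSGap (zero_lt_one.trans_le hx))
      (fun x hx => by linarith [mul_log_one_add_sq_sub_le_log_two (le_of_lt hx)])
  have h1 : fisherJSGap 1 = 0 := by norm_num [fisherJSGap]
  simpa [h1] using hmono self_mem_Ici hu hu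

lemma four_div_log_two_mul_jensenShannon_one_sq_sub {u : ℝ} (hu : 0 < u) :
    4 / log 2 * jensenShannon 1 (u ^ 2) - fisherSq 1 (u ^ 2) = 2 / log 2 * fisherJSGap u := by
  have h1 : log (2 * 1 / (1 + u ^ 2)) = log 2 - log (1 + u ^ 2) := by
    rw [mul_one, log_div two_ne_zero (by positivity)]
  have h2 : log (2 * u ^ 2 / (1 + u ^ 2)) = log 2 + 2 * log u - log (1 + u ^ 2) := by
    rw [log_div (by positivity) (by positivity), log_mul two_ne_zero (by positivity), log_pow]
    norm_num
  simp only [jensenShannon, fisherSq, fisherJSGap, h1, h2, sqrt_one, sqrt_sq hu.le]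
  field_simp
  ring

lemma fisherSq_one_le_jensenShannon_one {t : ℝ} (ht : 1 ≤ t) :
    fisherSq 1 t ≤ 4 / log 2 * jensenShannon 1 t := by
  have hu : 1 ≤ √t := one_le_sqrt.mpr ht
  have hgap : 0 ≤ 2 / log 2 * fisherJSGap √t :=
    mul_nonneg (div_nonneg zero_le_two (log_pos one_lt_two).le) (fisherJSGap_nonneg hu)
  have key := four_div_log_two_mul_jensenShannon_one_sq_sub (zero_lt_one.trans_le hu)
  rw [sq_sqrt (zero_le_one.trans ht)] at key
  linarith

lemma fisherSq_le_jensenShannon {a b : ℝ} (ha : 0 < a) (hb : 0 < b) :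
    fisherSq a b ≤ 4 / log 2 * jensenShannon a b := by
  wlog hab : a ≤ b generalizing a b
  · rw [fisherSq_comm, jensenShannon_comm]
    exact this hb ha (le_of_not_ge hab)
  rw [fisherSq_eq_mul_fisherSq_one_div ha, jensenShannon_eq_mul_jensenShannon_one_div ha.ne',
    mul_left_comm]
  exact mul_le_mul_of_nonneg_left
    (fisherSq_one_le_jensenShannon_one ((one_le_div ha).mpr hab)) ha.le

lemma tendsto_fisherSq_one_div_self : Tendsto (fun b => fisherSq 1 b / b) atTop (𝓝 2) := by
  have h : Tendsto (fun b => 2 * ((√b)⁻¹ - 1) ^ 2) atTop (𝓝 (2 * (0 - 1) ^ 2)) :=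
    (((tendsto_inv_atTop_zero.comp tendsto_sqrt_atTop).sub_const 1).pow 2).const_mul 2
  norm_num at h
  refine h.congr' ?_
  filter_upwards [eventually_gt_atTop 0] with b hb
  rw [fisherSq, sqrt_one]
  nth_rw 3 [← sq_sqrt hb.le]
  field_simp

lemma tendsto_jensenShannon_one_div_self :
    Tendsto (fun b => jensenShannon 1 b / b) atTop (𝓝 (log 2 / 2)) := by
  have hlog : Tendsto (fun b => log b / b) atTop (𝓝 0) := by
    simpa using isLittleO_log_id_atTop.tendsto_div_nhds_zero
  have h := ((((tendsto_const_nhds (x := log 2)).add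
    ((tendsto_const_nhds (x := log 2)).div_atTop tendsto_id)).sub
    ((tendsto_inv_atTop_zero.const_add 1).mul (tendsto_log_comp_add_sub_log 1))).sub
    hlog).div_const 2
  norm_num at h
  refine h.congr' ?_
  filter_upwards [eventually_gt_atTop 0] with b hb
  have h1 : log (2 * 1 / (1 + b)) = log 2 - log (b + 1) := by
    rw [mul_one, log_div two_ne_zero (by positivity), add_comm]
  have h2 : log (2 * b / (1 + b)) = log 2 + log b - log (b + 1) := by
    rw [log_div (by positivity) (by positivity), log_mul two_ne_zero hb.ne', add_comm 1 b]
  rw [jensenShannon, h1, h2]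
  field_simp
  ring

lemma tendsto_fisherSq_div_jensenShannon {a : ℝ} (ha : 0 < a) :
    Tendsto (fun b => fisherSq a b / jensenShannon a b) atTop (𝓝 (4 / log 2)) := by
  have hone : Tendsto (fun b => fisherSq 1 b / jensenShannon 1 b) atTop (𝓝 (4 / log 2)) := by
    have h := tendsto_fisherSq_one_div_self.div tendsto_jensenShannon_one_div_self
      (div_pos (log_pos one_lt_two) two_pos).ne'
    rw [div_div_eq_mul_div, mul_comm, mul_div_assoc, two_mul, ← add_div] at h
    norm_num at h
    refine h.congr' ?_
    filter_upwards [eventually_gt_atTop 0] with b hb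
    exact div_div_div_cancel_right₀ hb.ne' _ _
  refine (hone.comp (tendsto_id.atTop_div_const ha)).congr fun b => ?_
  rw [Function.comp_apply, id, fisherSq_eq_mul_fisherSq_one_div ha,
    jensenShannon_eq_mul_jensenShannon_one_div ha.ne', mul_div_mul_left _ _ ha.ne']

/-- `ρ(a,b)² ≤ (4/ln 2)·JS(a,b)`, and the constant `4/ln 2` is
optimal: it is attained in the limit `b/a → ∞`. -/
theorem fisher_sq_le_js_optimal :
    (∀ a b : ℝ, 0 < a → 0 < b →
      2 * (Real.sqrt a - Real.sqrt b) ^ 2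
        ≤ (4 / Real.log 2) *
          ((1 / 2) * (a * Real.log (2 * a / (a + b)) + b * Real.log (2 * b / (a + b))))) ∧
    Tendsto (fun b : ℝ =>
        (2 * (Real.sqrt 1 - Real.sqrt b) ^ 2) /
          ((1 / 2) * (1 * Real.log (2 * 1 / (1 + b)) + b * Real.log (2 * b / (1 + b)))))
      atTop (nhds (4 / Real.log 2)) :=
  ⟨fun _ _ ha hb => fisherSq_le_jensenShannon ha hb, tendsto_fisherSq_div_jensenShannon one_pos⟩
end

section
/- Define f(t) = ( ln(2/(t²+1)) + t² ln(2t²/(t²+1)) ) / (4(t−1)²) for t > 1. Then f is strictly monotonically decreasing on (1, ∞), with lim_{t→1⁺} f(t) = 1/4 and lim_{t→∞} f(t) = (ln 2)/4; consequently (ln 2)/4 ≤ f(t) ≤ 1/4 for all t > 1. -/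
/-!
Write `N(t) = 2 JS(1, t²)`, so that `f = N / (4 (t - 1)²)`. Since `N(1) = N'(1) = 0`, the
derivative of `N / (t - 1)²` has the sign of `H = (t - 1) N' - 2 N`, and `H(1) = H'(1) = 0` with
`H'' = (t - 1) N'''`. Here `N'''(t) = 4 (1 - t²) / (t (t² + 1)²) < 0` for `t > 1`, so `H < 0` and
`f` is strictly decreasing; l'Hôpital gives `f → N''(1) / 8 = 1/4` at `1`. For `t → ∞` we use
the identity `f(1/t) = f(t)`, which holds because `JS` and `ρ²` are symmetric and homogeneous of
degree one, and the continuity of `N` at `0`, where `N(0) = ln 2`.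
-/

open Filter Set Real Topology

theorem hasDerivAt_sub_sq (a x : ℝ) : HasDerivAt (fun y => (y - a) ^ 2) (2 * (x - a)) x := by
  simpa using ((hasDerivAt_id' x).sub_const a).fun_pow 2

section DivSubSq

variable {N N₁ N₂ N₃ : ℝ → ℝ} {a : ℝ}

theorem neg_of_hasDerivAt_neg_of_eq_zero {g g' : ℝ → ℝ} (hcont : ContinuousOn g (Ici a))
    (hderiv : ∀ x, a < x → HasDerivAt g (g' x) x) (hneg : ∀ x, a < x → g' x < 0)
    (ha : g a = 0) {x : ℝ} (hx : a < x) : g x < 0 := by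
  have hanti : StrictAntiOn g (Ici a) :=
    strictAntiOn_of_hasDerivWithinAt_neg (convex_Ici a) hcont
      (fun y hy => (hderiv y (by simpa using hy)).hasDerivWithinAt)
      (fun y hy => hneg y (by simpa using hy))
  simpa [ha] using hanti self_mem_Ici hx.le hx

theorem HasDerivAt.div_sub_sq {x : ℝ} (hN : HasDerivAt N (N₁ x) x) (hx : x ≠ a) :
    HasDerivAt (fun y => N y / (y - a) ^ 2) (((x - a) * N₁ x - 2 * N x) / (x - a) ^ 3) x := by
  have hxa : x - a ≠ 0 := sub_ne_zero.2 hx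
  refine (hN.div (hasDerivAt_sub_sq a x) (pow_ne_zero 2 hxa)).congr_deriv ?_
  field_simp

theorem strictAntiOn_div_sub_sq
    (hN : ∀ x, a ≤ x → HasDerivAt N (N₁ x) x) (hN₁ : ∀ x, a ≤ x → HasDerivAt N₁ (N₂ x) x)
    (hN₂ : ∀ x, a ≤ x → HasDerivAt N₂ (N₃ x) x) (hN₃ : ∀ x, a < x → N₃ x < 0)
    (h₀ : N a = 0) (h₁ : N₁ a = 0) :
    StrictAntiOn (fun x => N x / (x - a) ^ 2) (Ioi a) := by
  have hid (y : ℝ) : HasDerivAt (fun y => y - a) 1 y := (hasDerivAt_id' y).sub_const a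
  have hH' : ∀ x, a < x → (x - a) * N₂ x - N₁ x < 0 := by
    refine fun x hx => neg_of_hasDerivAt_neg_of_eq_zero
      (g := fun y => (y - a) * N₂ y - N₁ y) (g' := fun y => (y - a) * N₃ y)
      (fun y hy => ?_) (fun y hy => ?_)
      (fun y hy => mul_neg_of_pos_of_neg (sub_pos.2 hy) (hN₃ y hy)) (by simp [h₁]) hx
    · exact (((hid y).mul (hN₂ y hy)).sub (hN₁ y hy)).continuousAt.continuousWithinAt
    · exact (((hid y).mul (hN₂ y hy.le)).sub (hN₁ y hy.le)).congr_deriv (by ring)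
  have hH : ∀ x, a < x → (x - a) * N₁ x - 2 * N x < 0 := by
    refine fun x hx => neg_of_hasDerivAt_neg_of_eq_zero
      (g := fun y => (y - a) * N₁ y - 2 * N y) (fun y hy => ?_) (fun y hy => ?_) hH' (by simp [h₀]) hx
    · exact (((hid y).mul (hN₁ y hy)).sub ((hN y hy).const_mul 2)).continuousAt
        |>.continuousWithinAt
    · exact (((hid y).mul (hN₁ y hy.le)).sub ((hN y hy.le).const_mul 2)).congr_deriv (by ring)
  refine strictAntiOn_of_hasDerivWithinAt_neg (convex_Ioi a)
    (f' := fun x => ((x - a) * N₁ x - 2 * N x) / (x - a) ^ 3)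
    (fun x hx => ((hN x hx.le).div_sub_sq (ne_of_gt hx)).continuousAt.continuousWithinAt)
    (fun x hx => ?_) (fun x hx => ?_) <;> simp only [interior_Ioi, mem_Ioi] at hx ⊢
  · exact ((hN x hx.le).div_sub_sq (ne_of_gt hx)).hasDerivWithinAt
  · exact div_neg_of_neg_of_pos (hH x hx) (pow_pos (sub_pos.2 hx) 3)

theorem tendsto_div_sub_sq_nhdsGT (hN : ∀ x, a ≤ x → HasDerivAt N (N₁ x) x)
    (hN₁ : HasDerivAt N₁ (N₂ a) a) (h₀ : N a = 0) (h₁ : N₁ a = 0) :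
    Tendsto (fun x => N x / (x - a) ^ 2) (𝓝[>] a) (𝓝 (N₂ a / 2)) := by
  have hgt : ∀ᶠ x in 𝓝[>] a, a < x := self_mem_nhdsWithin
  have hslope : Tendsto (fun x => N₁ x / (x - a)) (𝓝[>] a) (𝓝 (N₂ a)) := by
    have := (hasDerivAt_iff_tendsto_slope.1 hN₁).mono_left
      (nhdsWithin_mono _ fun x (hx : x ∈ Ioi a) => ne_of_gt hx)
    simpa only [slope_fun_def_field, h₁, sub_zero] using this
  refine HasDerivAt.lhopital_zero_nhdsGT (f' := N₁) (g' := fun x => 2 * (x - a))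
    (hgt.mono fun x hx => hN x hx.le) (hgt.mono fun x _ => hasDerivAt_sub_sq a x)
    (hgt.mono fun x hx => by simp [(sub_pos.2 hx).ne'])
    ?_ ?_ ((hslope.div_const 2).congr fun x => by rw [div_div, mul_comm])
  · simpa [h₀] using (hN a le_rfl).continuousAt.tendsto.mono_left nhdsWithin_le_nhds
  · simpa using (hasDerivAt_sub_sq a a).continuousAt.tendsto.mono_left nhdsWithin_le_nhds

end DivSubSq

/-- `jsNum t = 2 JS(1, t²)`. -/
noncomputable def jsNum (t : ℝ) : ℝ :=
  log (2 / (t ^ 2 + 1)) + t ^ 2 * log (2 * t ^ 2 / (t ^ 2 + 1))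

noncomputable def jsFisherRatio (t : ℝ) : ℝ := jsNum t / (4 * (t - 1) ^ 2)

theorem hasDerivAt_sq_add_one (t : ℝ) : HasDerivAt (fun t => t ^ 2 + 1) (2 * t) t := by
  simpa using (hasDerivAt_pow 2 t).add_const 1

theorem hasDerivAt_log_two_div_sq_add_one (t : ℝ) :
    HasDerivAt (fun t => log (2 / (t ^ 2 + 1))) (-(2 * t) / (t ^ 2 + 1)) t := by
  refine ((hasDerivAt_const t 2).fun_div (hasDerivAt_sq_add_one t) (by positivity)).log
    (by positivity) |>.congr_deriv ?_
  field_simp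
  ring

theorem hasDerivAt_log_two_mul_sq_div {t : ℝ} (ht : t ≠ 0) :
    HasDerivAt (fun t => log (2 * t ^ 2 / (t ^ 2 + 1))) (2 / (t * (t ^ 2 + 1))) t := by
  have hp : HasDerivAt (fun t => 2 * t ^ 2) (2 * (2 * t)) t := by
    simpa using (hasDerivAt_pow 2 t).const_mul 2
  refine (hp.fun_div (hasDerivAt_sq_add_one t) (by positivity)).log (by positivity)
    |>.congr_deriv ?_
  field_simp
  ring

theorem hasDerivAt_jsNum {t : ℝ} (ht : t ≠ 0) :
    HasDerivAt jsNum (2 * t * log (2 * t ^ 2 / (t ^ 2 + 1))) t := by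
  refine ((hasDerivAt_log_two_div_sq_add_one t).add
    ((hasDerivAt_pow 2 t).mul (hasDerivAt_log_two_mul_sq_div ht))).congr_deriv ?_
  field_simp
  ring

theorem hasDerivAt_jsNum_deriv {t : ℝ} (ht : t ≠ 0) :
    HasDerivAt (fun t => 2 * t * log (2 * t ^ 2 / (t ^ 2 + 1)))
      (2 * log (2 * t ^ 2 / (t ^ 2 + 1)) + 4 / (t ^ 2 + 1)) t := by
  refine (((hasDerivAt_id' t).const_mul 2).mul (hasDerivAt_log_two_mul_sq_div ht)).congr_deriv ?_
  field_simp
  ring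

theorem hasDerivAt_jsNum_deriv2 {t : ℝ} (ht : t ≠ 0) :
    HasDerivAt (fun t => 2 * log (2 * t ^ 2 / (t ^ 2 + 1)) + 4 / (t ^ 2 + 1))
      (4 * (1 - t ^ 2) / (t * (t ^ 2 + 1) ^ 2)) t := by
  refine (((hasDerivAt_log_two_mul_sq_div ht).const_mul 2).add
    ((hasDerivAt_const t 4).fun_div (hasDerivAt_sq_add_one t) (by positivity))).congr_deriv ?_
  field_simp
  ring

theorem jsNum_inv {t : ℝ} (ht : t ≠ 0) : jsNum t⁻¹ = jsNum t / t ^ 2 := by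
  have h₁ : 2 / (t⁻¹ ^ 2 + 1) = 2 * t ^ 2 / (t ^ 2 + 1) := by field_simp; ring
  have h₂ : 2 * t⁻¹ ^ 2 / (t⁻¹ ^ 2 + 1) = 2 / (t ^ 2 + 1) := by field_simp; ring
  rw [jsNum, jsNum, h₁, h₂]
  field_simp
  ring

theorem jsNum_eq_mul_log_add_sq_mul_log (t : ℝ) :
    jsNum t = (t ^ 2 + 1) * log (2 / (t ^ 2 + 1)) + t ^ 2 * log (t ^ 2) := by
  rcases eq_or_ne t 0 with rfl | ht
  · simp [jsNum]
  rw [jsNum, mul_div_assoc, log_mul two_ne_zero (by positivity),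
    log_div two_ne_zero (by positivity), log_div (pow_ne_zero 2 ht) (by positivity)]
  ring

theorem continuous_jsNum : Continuous jsNum := by
  have : Continuous fun t : ℝ => log (2 / (t ^ 2 + 1)) :=
    Continuous.log (by fun_prop (disch := intro; positivity)) fun t => by positivity
  rw [funext jsNum_eq_mul_log_add_sq_mul_log]
  fun_prop

theorem jsFisherRatio_inv {t : ℝ} (ht : t ≠ 0) : jsFisherRatio t⁻¹ = jsFisherRatio t := by
  rw [jsFisherRatio, jsFisherRatio, jsNum_inv ht, div_div]
  congr 1
  field_simp
  ring

theorem jsFisherRatio_eq_div_four (t : ℝ) : jsFisherRatio t = jsNum t / (t - 1) ^ 2 / 4 := by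
  rw [jsFisherRatio, div_div, mul_comm]

theorem strictAntiOn_jsFisherRatio : StrictAntiOn jsFisherRatio (Ioi 1) := by
  have hne {x : ℝ} (hx : 1 ≤ x) : x ≠ 0 := by positivity
  have h := strictAntiOn_div_sub_sq (N := jsNum) (a := 1)
    (fun x hx => hasDerivAt_jsNum (hne hx)) (fun x hx => hasDerivAt_jsNum_deriv (hne hx))
    (fun x hx => hasDerivAt_jsNum_deriv2 (hne hx))
    (fun x hx => div_neg_of_neg_of_pos (by nlinarith) (by positivity))
    (by norm_num [jsNum]) (by norm_num)
  intro x hx y hy hxy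
  simp only [jsFisherRatio_eq_div_four]
  exact div_lt_div_of_pos_right (h hx hy hxy) four_pos

theorem tendsto_jsFisherRatio_nhdsGT_one : Tendsto jsFisherRatio (𝓝[>] 1) (𝓝 (1 / 4)) := by
  have h := tendsto_div_sub_sq_nhdsGT (N := jsNum) (a := 1)
    (N₂ := fun t => 2 * log (2 * t ^ 2 / (t ^ 2 + 1)) + 4 / (t ^ 2 + 1))
    (fun x hx => hasDerivAt_jsNum (by positivity)) (hasDerivAt_jsNum_deriv one_ne_zero)
    (by norm_num [jsNum]) (by norm_num)
  norm_num at h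
  simpa [funext jsFisherRatio_eq_div_four] using h.div_const 4

theorem tendsto_jsFisherRatio_atTop : Tendsto jsFisherRatio atTop (𝓝 (log 2 / 4)) := by
  have hcont : ContinuousAt jsFisherRatio 0 :=
    continuous_jsNum.continuousAt.div (by fun_prop) (by norm_num)
  have h0 : jsFisherRatio 0 = log 2 / 4 := by simp [jsFisherRatio, jsNum]
  rw [← h0]
  refine (hcont.tendsto.comp tendsto_inv_atTop_zero).congr' ?_
  filter_upwards [eventually_gt_atTop 0] with t ht
  exact jsFisherRatio_inv ht.ne'

/-- The ratio `f(t) = JS(1,t²)/ρ(1,t²)²` is strictly decreasing on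
`(1,∞)`, tends to `1/4` as `t → 1⁺` and to `(ln 2)/4` as `t → ∞`; consequently
`(ln 2)/4 ≤ f(t) ≤ 1/4` for `t > 1`. -/
theorem js_fisher_ratio_monotone
    (f : ℝ → ℝ)
    (hf : f = fun t => (Real.log (2 / (t ^ 2 + 1))
      + t ^ 2 * Real.log (2 * t ^ 2 / (t ^ 2 + 1))) / (4 * (t - 1) ^ 2)) :
    StrictAntiOn f (Set.Ioi 1) ∧
    Tendsto f (nhdsWithin 1 (Set.Ioi 1)) (nhds (1 / 4)) ∧
    Tendsto f atTop (nhds (Real.log 2 / 4)) ∧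
    ∀ t : ℝ, 1 < t → Real.log 2 / 4 ≤ f t ∧ f t ≤ 1 / 4 := by
  obtain rfl : f = jsFisherRatio := hf
  have hanti := strictAntiOn_jsFisherRatio
  have hone := tendsto_jsFisherRatio_nhdsGT_one
  have htop := tendsto_jsFisherRatio_atTop
  refine ⟨hanti, hone, htop, fun t ht => ⟨?_, ?_⟩⟩
  · refine le_of_tendsto htop ?_
    filter_upwards [eventually_gt_atTop t] with s hs
    exact (hanti ht (ht.trans hs) hs).le
  · refine ge_of_tendsto hone ?_
    filter_upwards [Ioo_mem_nhdsGT ht] with s hs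
    exact (hanti hs.1 ht hs.2).le
end

section
/- For t > 1, the function u(t) = (t+1) ln((t²+1)/2) − t ln(t²) is strictly negative; equivalently, ln((t²+1)/2) < t ln(2t²/(t²+1)) for all t > 1. -/
/-!
Both `u` and `u'` vanish at `1`, while `u'' t = -2 (t - 1)² (t + 1) / (t (t² + 1)²) < 0` for
`t > 1`. So `u'` and then `u` are strictly decreasing on `[1, ∞)`, hence negative on `(1, ∞)`.
-/

open Real Set

theorem lt_of_hasDerivAt_neg {f f' : ℝ → ℝ} {a b : ℝ}
    (hf : ∀ x ∈ Icc a b, HasDerivAt f (f' x) x) (hf' : ∀ x ∈ Ioo a b, f' x < 0) (hab : a < b) :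
    f b < f a := by
  have hanti : StrictAntiOn f (Icc a b) := by
    refine strictAntiOn_of_hasDerivWithinAt_neg (f' := f') (convex_Icc a b)
      (fun x hx ↦ (hf x hx).continuousAt.continuousWithinAt) (fun x hx ↦ ?_) ?_
    · exact (hf x (interior_subset hx)).hasDerivWithinAt
    · simpa only [interior_Icc] using hf'
  exact hanti (left_mem_Icc.2 hab.le) (right_mem_Icc.2 hab.le) hab

namespace KeyInequality

noncomputable def u (t : ℝ) : ℝ :=
  (t + 1) * log ((t ^ 2 + 1) / 2) - t * log (t ^ 2)

noncomputable def uDeriv (t : ℝ) : ℝ :=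
  log ((t ^ 2 + 1) / 2) - log (t ^ 2) + 2 * t * (t + 1) / (t ^ 2 + 1) - 2

theorem hasDerivAt_log_sq_add_one_div_two (t : ℝ) :
    HasDerivAt (fun x ↦ log ((x ^ 2 + 1) / 2)) (2 * t / (t ^ 2 + 1)) t := by
  have h := (((hasDerivAt_pow 2 t).add_const 1).div_const 2).log (by positivity)
  convert h using 1
  field_simp
  ring

theorem hasDerivAt_log_sq {t : ℝ} (ht : t ≠ 0) :
    HasDerivAt (fun x ↦ log (x ^ 2)) (2 / t) t := by
  have h := (hasDerivAt_pow 2 t).log (pow_ne_zero 2 ht)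
  convert h using 1
  field_simp
  ring

theorem hasDerivAt_u {t : ℝ} (ht : t ≠ 0) : HasDerivAt u (uDeriv t) t := by
  have h := (((hasDerivAt_id' t).add_const 1).mul (hasDerivAt_log_sq_add_one_div_two t)).sub
    ((hasDerivAt_id' t).mul (hasDerivAt_log_sq ht))
  refine h.congr_deriv ?_
  simp only [uDeriv]
  field_simp
  ring

theorem hasDerivAt_uDeriv {t : ℝ} (ht : t ≠ 0) :
    HasDerivAt uDeriv (-(2 * (t - 1) ^ 2 * (t + 1) / (t * (t ^ 2 + 1) ^ 2))) t := by
  have hnum := ((hasDerivAt_id' t).const_mul 2).mul ((hasDerivAt_id' t).add_const 1)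
  have hden := (hasDerivAt_pow 2 t).add_const 1
  have h := (((hasDerivAt_log_sq_add_one_div_two t).sub (hasDerivAt_log_sq ht)).add
    (hnum.div hden (by positivity))).sub_const 2
  refine h.congr_deriv ?_
  simp only [Pi.mul_apply]
  field_simp
  ring

theorem uDeriv_one : uDeriv 1 = 0 := by norm_num [uDeriv]

theorem u_one : u 1 = 0 := by norm_num [u]

theorem uDeriv_neg {t : ℝ} (ht : 1 < t) : uDeriv t < 0 := by
  rw [← uDeriv_one]
  refine lt_of_hasDerivAt_neg (fun x hx ↦ hasDerivAt_uDeriv (by linarith [hx.1]))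
    (fun x ⟨hx, _⟩ ↦ neg_lt_zero.2 <| div_pos ?_ ?_) ht
  · exact mul_pos (mul_pos two_pos (pow_pos (sub_pos.2 hx) 2)) (by linarith)
  · exact mul_pos (by linarith) (by positivity)

theorem u_neg {t : ℝ} (ht : 1 < t) : u t < 0 := by
  rw [← u_one]
  exact lt_of_hasDerivAt_neg (fun x hx ↦ hasDerivAt_u (by linarith [hx.1]))
    (fun x hx ↦ uDeriv_neg hx.1) ht

end KeyInequality

/-- For `t > 1`, `u(t) = (t+1) ln((t²+1)/2) − t ln(t²) < 0`;
equivalently `ln((t²+1)/2) < t ln(2t²/(t²+1))`. -/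
theorem key_inequality (t : ℝ) (ht : 1 < t) :
    (t + 1) * Real.log ((t ^ 2 + 1) / 2) - t * Real.log (t ^ 2) < 0 ∧
    Real.log ((t ^ 2 + 1) / 2) < t * Real.log (2 * t ^ 2 / (t ^ 2 + 1)) := by
  have hu : (t + 1) * log ((t ^ 2 + 1) / 2) - t * log (t ^ 2) < 0 := KeyInequality.u_neg ht
  have hlog : log (2 * t ^ 2 / (t ^ 2 + 1)) = log (t ^ 2) - log ((t ^ 2 + 1) / 2) := by
    rw [← log_div (by positivity) (by positivity)]
    congr 1
    field_simp
  refine ⟨hu, ?_⟩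
  rw [hlog]
  linarith
end

section
/- For all a, b > 0, the Burbea–Rao divergence of the Burg entropy, BR(a,b) = ½ ln( (a+b)²/(4ab) ), and the squared Burg information distance σ(a,b)² = ½ (ln a − ln b)² satisfy 4·BR(a,b) ≤ σ(a,b)²; moreover, for every C > 0 there exist a, b > 0 with σ(a,b)² > C·BR(a,b). -/
/-- `4·BR(a,b) ≤ σ(a,b)²`, and no reverse inequality with any
constant `C` holds. -/
theorem burbeaRao_vs_burg :
    (∀ a b : ℝ, 0 < a → 0 < b →
      4 * ((1 / 2) * Real.log ((a + b) ^ 2 / (4 * a * b)))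
        ≤ (1 / 2) * (Real.log a - Real.log b) ^ 2) ∧
    ∀ C : ℝ, 0 < C → ∃ a b : ℝ, 0 < a ∧ 0 < b ∧
      C * ((1 / 2) * Real.log ((a + b) ^ 2 / (4 * a * b)))
        < (1 / 2) * (Real.log a - Real.log b) ^ 2 := by
  constructor
  · intro a b ha hb
    set u : ℝ := (Real.log a - Real.log b) / 2 with hu
    have he2 : Real.exp u ^ 2 = a / b := by
      rw [← Real.exp_nat_mul]
      have : (2 : ℕ) * u = Real.log a - Real.log b := by rw [hu]; ring
      rw [this, Real.exp_sub, Real.exp_log ha, Real.exp_log hb]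
    have hf2 : Real.exp (-u) ^ 2 = b / a := by
      rw [← Real.exp_nat_mul]
      have : (2 : ℕ) * (-u) = Real.log b - Real.log a := by rw [hu]; ring
      rw [this, Real.exp_sub, Real.exp_log ha, Real.exp_log hb]
    have hef : Real.exp u * Real.exp (-u) = 1 := by
      rw [← Real.exp_add]; simp
    have hQ : (a + b) ^ 2 / (4 * a * b) = Real.cosh u ^ 2 := by
      rw [Real.cosh_eq]
      have h1 : Real.exp u ^ 2 * b = a := by
        rw [he2]; field_simp
      have h2 : Real.exp (-u) ^ 2 * a = b := by
        rw [hf2]; field_simp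
      field_simp
      linear_combination (-4 * a) * h1 + (-4 * b) * h2 + (-8 * a * b) * hef
    rw [hQ]
    have hcp : 0 < Real.cosh u := Real.cosh_pos u
    have hlog : Real.log (Real.cosh u ^ 2) = 2 * Real.log (Real.cosh u) := by
      rw [Real.log_pow]; push_cast; ring
    rw [hlog]
    have h := Real.cosh_le_exp_half_sq u
    have hln : Real.log (Real.cosh u) ≤ u ^ 2 / 2 := by
      calc Real.log (Real.cosh u) ≤ Real.log (Real.exp (u ^ 2 / 2)) :=
            Real.log_le_log hcp h
        _ = u ^ 2 / 2 := Real.log_exp _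
    have : (Real.log a - Real.log b) ^ 2 = 4 * u ^ 2 := by rw [hu]; ring
    rw [this]
    nlinarith [hln]
  · intro C hC
    refine ⟨Real.exp (C + 1), 1, Real.exp_pos _, one_pos, ?_⟩
    have hs : (0 : ℝ) < C + 1 := by linarith
    have hlog1 : Real.log (Real.exp (C + 1)) = C + 1 := Real.log_exp _
    have hQpos : 0 < (Real.exp (C + 1) + 1) ^ 2 / (4 * Real.exp (C + 1) * 1) := by
      positivity
    have hBR : Real.log ((Real.exp (C + 1) + 1) ^ 2 / (4 * Real.exp (C + 1) * 1))
        ≤ C + 1 := by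
      have hle : (Real.exp (C + 1) + 1) ^ 2 / (4 * Real.exp (C + 1) * 1)
          ≤ Real.exp (C + 1) := by
        rw [div_le_iff₀ (by positivity)]
        nlinarith [Real.exp_pos (C + 1), Real.add_one_le_exp (C + 1)]
      calc Real.log _ ≤ Real.log (Real.exp (C + 1)) := Real.log_le_log hQpos hle
        _ = C + 1 := Real.log_exp _
    rw [hlog1, Real.log_one]
    have : C * ((1 / 2) * Real.log ((Real.exp (C + 1) + 1) ^ 2 /
        (4 * Real.exp (C + 1) * 1))) ≤ C * ((C + 1) / 2) := by
      apply mul_le_mul_of_nonneg_left _ hC.le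
      linarith
    nlinarith [this]
end
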